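/- For all a, b, c ≥ 0 one has F₁·E^{(a,b,c)} − E^{(a,b,c)}·F₁ = −E^{(a−1,b,c)}·[K₁; a−b+2c−1] − E^{(a,b,c−1)}·[K₁; c−1], where E^{(a,b,c)} = 0 if any index is negative and [K₁; x] := (K₁ q^{x} − K₁′ q^{−x})/(q − q^{−1}). -/

import Mathlib

noncomputable section

def q : RatFunc ℚ := RatFunc.X

/-- Quantum integer `[n] = (q^n - q^{-n})/(q - q^{-1})`. -/
def qi (n : ℤ) : RatFunc ℚ := (q ^ n - q ^ (-n)) / (q - q⁻¹)

/-- Quantum factorial `[n]! = [1][2]⋯[n]`. -/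
def qfac : ℕ → RatFunc ℚ
  | 0 => 1
  | n + 1 => qfac n * qi (n + 1)

/-- Divided power `X^{(n)} = X^n/[n]!`. -/
def dpow {A : Type*} [Ring A] [Algebra (RatFunc ℚ) A] (X : A) (n : ℕ) : A :=
  (qfac n)⁻¹ • X ^ n

/-- `E^{(a,b,c)} := E₁^{(a)}E₂^{(b)}E₁^{(c)}`, 0 if any index is negative. -/
def E3 {A : Type*} [Ring A] [Algebra (RatFunc ℚ) A] (E₁ E₂ : A) (a b c : ℤ) : A :=
  if a < 0 ∨ b < 0 ∨ c < 0 then 0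
  else dpow E₁ a.toNat * dpow E₂ b.toNat * dpow E₁ c.toNat

/-- `[K₁; x] := (K₁ q^{x} − K₁′ q^{−x})/(q − q^{−1})`. -/
def brK {A : Type*} [Ring A] [Algebra (RatFunc ℚ) A] (K K' : A) (x : ℤ) : A :=
  (q - q⁻¹)⁻¹ • (q ^ x • K - q ^ (-x) • K')

namespace F1CommE3Aux

lemma q_ne : q ≠ 0 := RatFunc.X_ne_zero

lemma qpow_ne_one {n : ℕ} (hn : n ≠ 0) : q ^ n ≠ 1 := by
  intro h
  have h1 : (algebraMap (Polynomial ℚ) (RatFunc ℚ)) (Polynomial.X ^ n) =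
      (algebraMap (Polynomial ℚ) (RatFunc ℚ)) 1 := by
    simpa [map_pow, RatFunc.algebraMap_X, q] using h
  have h2 := RatFunc.algebraMap_injective ℚ h1
  have h3 := congrArg Polynomial.natDegree h2
  simp [Polynomial.natDegree_X_pow] at h3
  omega

lemma hd : q - q⁻¹ ≠ 0 := by
  rw [sub_ne_zero]
  intro h
  have hq : q * q = 1 := by nth_rewrite 2 [h]; exact mul_inv_cancel₀ q_ne
  exact qpow_ne_one (n := 2) (by norm_num) (by rw [pow_two]; exact hq)

lemma hq21 : q ^ 2 - 1 ≠ 0 := sub_ne_zero.mpr (qpow_ne_one (by norm_num))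

lemma hdd : q - q⁻¹ = (q ^ 2 - 1) * q⁻¹ := by
  field_simp [q_ne]

lemma qi_nat_ne (n : ℕ) (hn : n ≠ 0) : qi n ≠ 0 := by
  unfold qi
  apply div_ne_zero _ hd
  rw [sub_ne_zero, zpow_natCast, zpow_neg, zpow_natCast]
  intro h
  have h1 : q ^ n * q ^ n = 1 := by
    nth_rewrite 2 [h]; exact mul_inv_cancel₀ (pow_ne_zero _ q_ne)
  rw [← pow_add] at h1
  exact qpow_ne_one (by omega) h1

lemma qi_one : qi 1 = 1 := by
  unfold qi
  rw [zpow_one, zpow_neg, zpow_one, div_self hd]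

lemma qfac_ne (n : ℕ) : qfac n ≠ 0 := by
  induction n with
  | zero => simp [qfac]
  | succ k ih =>
    have : qfac (k + 1) = qfac k * qi (k + 1) := rfl
    rw [this]
    exact mul_ne_zero ih (by exact_mod_cast qi_nat_ne (k + 1) (by omega))

lemma qiA (k : ℕ) : qi (k + 1) * q ^ ((k : ℤ) + 2) + 1 = qi (k + 2) * q ^ ((k : ℤ) + 1) := by
  unfold qi
  have hq := q_ne
  have h21 := hq21
  have h1 : ((k : ℤ) + 1) = ((k + 1 : ℕ) : ℤ) := by push_cast; ring
  have h2 : ((k : ℤ) + 2) = ((k + 2 : ℕ) : ℤ) := by push_cast; ring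
  rw [h1, h2, hdd]
  simp only [zpow_neg, zpow_natCast]
  field_simp
  ring

lemma qiB (k : ℕ) : qi (k + 1) * q ^ (-((k : ℤ) + 2)) + 1 = qi (k + 2) * q ^ (-((k : ℤ) + 1)) := by
  unfold qi
  have hq := q_ne
  have h21 := hq21
  have h1 : ((k : ℤ) + 1) = ((k + 1 : ℕ) : ℤ) := by push_cast; ring
  have h2 : ((k : ℤ) + 2) = ((k + 2 : ℕ) : ℤ) := by push_cast; ring
  rw [h1, h2, hdd]
  simp only [zpow_neg, zpow_natCast]
  field_simp
  ring

section Alg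
variable {A : Type*} [Ring A] [Algebra (RatFunc ℚ) A]
variable (E₁ E₂ F₁ K₁ K₁' : A)

lemma brK_mul_E1 (hK1E1 : K₁ * E₁ = q ^ (2 : ℤ) • (E₁ * K₁))
    (hK1'E1 : K₁' * E₁ = q ^ (-2 : ℤ) • (E₁ * K₁')) (t : ℤ) :
    brK K₁ K₁' t * E₁ = E₁ * brK K₁ K₁' (t + 2) := by
  unfold brK
  rw [smul_mul_assoc, sub_mul, smul_mul_assoc, smul_mul_assoc, hK1E1, hK1'E1,
    smul_smul, smul_smul, ← zpow_add₀ q_ne, ← zpow_add₀ q_ne, smul_sub]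
  have h1 : (-t + -2 : ℤ) = -(t + 2) := by ring
  rw [h1, mul_smul_comm, mul_sub, mul_smul_comm, mul_smul_comm, smul_sub]

lemma brK_mul_E2 (hK1E2 : K₁ * E₂ = q ^ (-1 : ℤ) • (E₂ * K₁))
    (hK1'E2 : K₁' * E₂ = q • (E₂ * K₁')) (t : ℤ) :
    brK K₁ K₁' t * E₂ = E₂ * brK K₁ K₁' (t - 1) := by
  unfold brK
  rw [smul_mul_assoc, sub_mul, smul_mul_assoc, smul_mul_assoc, hK1E2, hK1'E2,
    smul_smul, smul_smul, ← zpow_add₀ q_ne, ← (zpow_add_one₀ q_ne (-t)), smul_sub]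
  have h1 : (t + -1 : ℤ) = t - 1 := by ring
  have h2 : (-t + 1 : ℤ) = -(t - 1) := by ring
  rw [h1, h2, mul_smul_comm, mul_sub, mul_smul_comm, mul_smul_comm, smul_sub]

lemma brK_mul_E1_pow (hK1E1 : K₁ * E₁ = q ^ (2 : ℤ) • (E₁ * K₁))
    (hK1'E1 : K₁' * E₁ = q ^ (-2 : ℤ) • (E₁ * K₁')) (t : ℤ) (m : ℕ) :
    brK K₁ K₁' t * E₁ ^ m = E₁ ^ m * brK K₁ K₁' (t + 2 * m) := by
  induction m generalizing t with
  | zero => simp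
  | succ n ih =>
    rw [pow_succ, ← mul_assoc, ih, mul_assoc, brK_mul_E1 _ _ _ hK1E1 hK1'E1, ← mul_assoc,
      ← pow_succ]
    congr 2
    push_cast; ring

lemma brK_mul_E2_pow (hK1E2 : K₁ * E₂ = q ^ (-1 : ℤ) • (E₂ * K₁))
    (hK1'E2 : K₁' * E₂ = q • (E₂ * K₁')) (t : ℤ) (m : ℕ) :
    brK K₁ K₁' t * E₂ ^ m = E₂ ^ m * brK K₁ K₁' (t - m) := by
  induction m generalizing t with
  | zero => simp
  | succ n ih =>
    rw [pow_succ, ← mul_assoc, ih, mul_assoc, brK_mul_E2 _ _ _ hK1E2 hK1'E2, ← mul_assoc,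
      ← pow_succ]
    congr 2
    push_cast; ring

lemma brK_mul_dpow_E1 (hK1E1 : K₁ * E₁ = q ^ (2 : ℤ) • (E₁ * K₁))
    (hK1'E1 : K₁' * E₁ = q ^ (-2 : ℤ) • (E₁ * K₁')) (t : ℤ) (m : ℕ) :
    brK K₁ K₁' t * dpow E₁ m = dpow E₁ m * brK K₁ K₁' (t + 2 * m) := by
  unfold dpow
  rw [mul_smul_comm, smul_mul_assoc, brK_mul_E1_pow _ _ _ hK1E1 hK1'E1]

lemma brK_mul_dpow_E2 (hK1E2 : K₁ * E₂ = q ^ (-1 : ℤ) • (E₂ * K₁))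
    (hK1'E2 : K₁' * E₂ = q • (E₂ * K₁')) (t : ℤ) (m : ℕ) :
    brK K₁ K₁' t * dpow E₂ m = dpow E₂ m * brK K₁ K₁' (t - m) := by
  unfold dpow
  rw [mul_smul_comm, smul_mul_assoc, brK_mul_E2_pow _ _ _ hK1E2 hK1'E2]

lemma smul_brK (r : RatFunc ℚ) (x : ℤ) :
    r • brK K₁ K₁' x = (q - q⁻¹)⁻¹ • ((r * q ^ x) • K₁ - (r * q ^ (-x)) • K₁') := by
  unfold brK
  rw [smul_comm, smul_sub, smul_smul, smul_smul]

lemma brK_combine (k : ℕ) :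
    qi ((k : ℤ) + 1) • brK K₁ K₁' ((k : ℤ) + 2) + brK K₁ K₁' 0
      = qi ((k : ℤ) + 2) • brK K₁ K₁' ((k : ℤ) + 1) := by
  rw [smul_brK, smul_brK]
  unfold brK
  rw [← smul_add]
  congr 1
  rw [← qiA k, ← qiB k]
  norm_num
  rw [add_smul, add_smul, one_smul, one_smul]
  abel

lemma F_mul_E1_pow (hE1F1 : E₁ * F₁ - F₁ * E₁ = (q - q⁻¹)⁻¹ • (K₁ - K₁'))
    (hK1E1 : K₁ * E₁ = q ^ (2 : ℤ) • (E₁ * K₁))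
    (hK1'E1 : K₁' * E₁ = q ^ (-2 : ℤ) • (E₁ * K₁')) (k : ℕ) :
    F₁ * E₁ ^ (k + 1) - E₁ ^ (k + 1) * F₁
      = -(qi ((k : ℤ) + 1) • (E₁ ^ k * brK K₁ K₁' (k : ℤ))) := by
  have h0 : brK K₁ K₁' 0 = (q - q⁻¹)⁻¹ • (K₁ - K₁') := by
    unfold brK; norm_num
  induction k with
  | zero =>
    have hq1 : ((0 : ℕ) : ℤ) + 1 = (1 : ℤ) := by norm_num
    rw [hq1, qi_one, one_smul, pow_zero, one_mul, pow_one, Nat.cast_zero, h0, ← hE1F1]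
    abel
  | succ n ih =>
    have key : F₁ * E₁ ^ (n + 1 + 1) - E₁ ^ (n + 1 + 1) * F₁
        = (F₁ * E₁ ^ (n + 1) - E₁ ^ (n + 1) * F₁) * E₁
          - E₁ ^ (n + 1) * (E₁ * F₁ - F₁ * E₁) := by
      rw [pow_succ]; noncomm_ring
    rw [key, ih, hE1F1, ← h0, neg_mul, smul_mul_assoc, mul_assoc,
      brK_mul_E1 _ _ _ hK1E1 hK1'E1, ← mul_assoc, ← pow_succ]
    rw [← mul_smul_comm, ← mul_smul_comm]
    have hc : ((n : ℤ) + 1) + 1 = (n : ℤ) + 2 := by ring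
    push_cast
    rw [hc, sub_eq_add_neg, ← neg_add, ← mul_add, brK_combine]

lemma dpow_zero (X : A) : dpow X 0 = 1 := by
  unfold dpow
  simp [qfac]

lemma F_mul_dpow_E1 (hE1F1 : E₁ * F₁ - F₁ * E₁ = (q - q⁻¹)⁻¹ • (K₁ - K₁'))
    (hK1E1 : K₁ * E₁ = q ^ (2 : ℤ) • (E₁ * K₁))
    (hK1'E1 : K₁' * E₁ = q ^ (-2 : ℤ) • (E₁ * K₁')) (k : ℕ) :
    F₁ * dpow E₁ (k + 1) - dpow E₁ (k + 1) * F₁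
      = -(dpow E₁ k * brK K₁ K₁' (k : ℤ)) := by
  unfold dpow
  rw [mul_smul_comm, smul_mul_assoc, ← smul_sub,
    F_mul_E1_pow _ _ _ _ hE1F1 hK1E1 hK1'E1, smul_neg, smul_smul]
  have hfac : qfac (k + 1) = qfac k * qi (k + 1) := rfl
  have hne : qi ((k : ℤ) + 1) ≠ 0 := by
    have h := qi_nat_ne (k + 1) (by omega)
    have hc : ((k + 1 : ℕ) : ℤ) = (k : ℤ) + 1 := by push_cast; ring
    rwa [hc] at h
  have hscal : (qfac (k + 1))⁻¹ * qi ((k : ℤ) + 1) = (qfac k)⁻¹ := by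
    rw [hfac, mul_inv, mul_assoc, inv_mul_cancel₀ hne, mul_one]
  rw [hscal, smul_mul_assoc]

lemma F_comm_E2_pow (hF1E2 : F₁ * E₂ = E₂ * F₁) (m : ℕ) :
    F₁ * E₂ ^ m = E₂ ^ m * F₁ := by
  induction m with
  | zero => simp
  | succ n ih => rw [pow_succ, ← mul_assoc, ih, mul_assoc, hF1E2, ← mul_assoc]

lemma F_comm_dpow_E2 (hF1E2 : F₁ * E₂ = E₂ * F₁) (m : ℕ) :
    F₁ * dpow E₂ m = dpow E₂ m * F₁ := by
  unfold dpow
  rw [mul_smul_comm, smul_mul_assoc, F_comm_E2_pow _ _ hF1E2]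

end Alg
end F1CommE3Aux

open F1CommE3Aux in
/-- For a, b, c ≥ 0:
`F₁·E^{(a,b,c)} − E^{(a,b,c)}·F₁ = −E^{(a−1,b,c)}·[K₁; a−b+2c−1] − E^{(a,b,c−1)}·[K₁; c−1]`. -/
theorem F1_comm_E3 {A : Type*} [Ring A] [Algebra (RatFunc ℚ) A]
    (E₁ E₂ F₁ K₁ K₁' : A)
    (hS1 : E₁ ^ 2 * E₂ - (q + q⁻¹) • (E₁ * E₂ * E₁) + E₂ * E₁ ^ 2 = 0)
    (hS2 : E₂ ^ 2 * E₁ - (q + q⁻¹) • (E₂ * E₁ * E₂) + E₁ * E₂ ^ 2 = 0)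
    (hF1E2 : F₁ * E₂ = E₂ * F₁)
    (hE1F1 : E₁ * F₁ - F₁ * E₁ = (q - q⁻¹)⁻¹ • (K₁ - K₁'))
    (hK1E1 : K₁ * E₁ = q ^ (2 : ℤ) • (E₁ * K₁))
    (hK1'E1 : K₁' * E₁ = q ^ (-2 : ℤ) • (E₁ * K₁'))
    (hK1E2 : K₁ * E₂ = q ^ (-1 : ℤ) • (E₂ * K₁))
    (hK1'E2 : K₁' * E₂ = q • (E₂ * K₁'))
    (a b c : ℤ) (ha : 0 ≤ a) (hb : 0 ≤ b) (hc : 0 ≤ c) :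
    F₁ * E3 E₁ E₂ a b c - E3 E₁ E₂ a b c * F₁
      = -(E3 E₁ E₂ (a - 1) b c * brK K₁ K₁' (a - b + 2 * c - 1))
        - E3 E₁ E₂ a b (c - 1) * brK K₁ K₁' (c - 1) := by
  lift a to ℕ using ha with na
  lift b to ℕ using hb with nb
  lift c to ℕ using hc with nc
  have hE3 : ∀ x y z : ℕ, E3 E₁ E₂ (x : ℤ) (y : ℤ) (z : ℤ)
      = dpow E₁ x * dpow E₂ y * dpow E₁ z := by
    intro x y z
    unfold E3
    rw [if_neg (by omega)]
    simp
  have hE3negA : ∀ (x : ℤ) (y z : ℤ), x < 0 → E3 E₁ E₂ x y z = 0 := by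
    intro x y z h
    unfold E3
    rw [if_pos (Or.inl h)]
  have hE3negC : ∀ (x y : ℤ) (z : ℤ), z < 0 → E3 E₁ E₂ x y z = 0 := by
    intro x y z h
    unfold E3
    rw [if_pos (Or.inr (Or.inr h))]
  -- main splitting identity
  have hPb : F₁ * dpow E₂ nb = dpow E₂ nb * F₁ := F_comm_dpow_E2 E₂ F₁ hF1E2 nb
  have main : ∀ Pa Pc : A, F₁ * dpow E₂ nb = dpow E₂ nb * F₁ →
      F₁ * (Pa * dpow E₂ nb * Pc) - Pa * dpow E₂ nb * Pc * F₁
        = (F₁ * Pa - Pa * F₁) * (dpow E₂ nb * Pc)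
          + Pa * dpow E₂ nb * (F₁ * Pc - Pc * F₁) := by
    intro Pa Pc h
    have step : F₁ * (Pa * dpow E₂ nb * Pc) - Pa * dpow E₂ nb * Pc * F₁
        = (F₁ * Pa - Pa * F₁) * (dpow E₂ nb * Pc)
          + Pa * (F₁ * dpow E₂ nb) * Pc - Pa * (dpow E₂ nb * F₁) * Pc
          + Pa * dpow E₂ nb * (F₁ * Pc - Pc * F₁) := by
      noncomm_ring
    rw [step, h]
    abel
  rw [hE3 na nb nc, main _ _ hPb]
  rcases na with _ | ka
  · rcases nc with _ | kc
    · -- na = 0, nc = 0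
      rw [dpow_zero]
      have h1 : F₁ * (1 : A) - 1 * F₁ = 0 := by rw [mul_one, one_mul, sub_self]
      rw [h1, zero_mul, mul_zero, add_zero]
      have z1 : E3 E₁ E₂ (((0:ℕ):ℤ) - 1) ((nb:ℕ):ℤ) (((0:ℕ):ℤ)) = 0 :=
        hE3negA _ _ _ (by norm_num)
      have z2 : E3 E₁ E₂ (((0:ℕ):ℤ)) ((nb:ℕ):ℤ) (((0:ℕ):ℤ) - 1) = 0 :=
        hE3negC _ _ _ (by norm_num)
      rw [z1, z2, zero_mul, zero_mul]
      norm_num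
    · -- na = 0, nc = kc + 1
      rw [dpow_zero]
      have h1 : F₁ * (1 : A) - 1 * F₁ = 0 := by rw [mul_one, one_mul, sub_self]
      rw [h1, zero_mul, zero_add,
        F_mul_dpow_E1 _ _ _ _ hE1F1 hK1E1 hK1'E1 kc]
      have z1 : E3 E₁ E₂ (((0:ℕ):ℤ) - 1) ((nb:ℕ):ℤ) (((kc+1:ℕ)):ℤ) = 0 :=
        hE3negA _ _ _ (by norm_num)
      have hcast : ((kc + 1 : ℕ) : ℤ) - 1 = ((kc : ℕ) : ℤ) := by push_cast; ring
      rw [z1, hcast, hE3 0 nb kc, dpow_zero, zero_mul, neg_zero]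
      simp [mul_assoc]
  · rcases nc with _ | kc
    · -- na = ka + 1, nc = 0
      rw [dpow_zero]
      have h1 : F₁ * (1 : A) - 1 * F₁ = 0 := by rw [mul_one, one_mul, sub_self]
      rw [h1, mul_zero, add_zero,
        F_mul_dpow_E1 _ _ _ _ hE1F1 hK1E1 hK1'E1 ka]
      have z2 : E3 E₁ E₂ (((ka+1:ℕ)):ℤ) ((nb:ℕ):ℤ) (((0:ℕ):ℤ) - 1) = 0 :=
        hE3negC _ _ _ (by norm_num)
      have hcast : ((ka + 1 : ℕ) : ℤ) - 1 = ((ka : ℕ) : ℤ) := by push_cast; ring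
      rw [z2, hcast, hE3 ka nb 0, dpow_zero, mul_one, zero_mul, neg_mul, mul_one,
        mul_assoc, brK_mul_dpow_E2 _ _ _ hK1E2 hK1'E2, ← mul_assoc]
      have hexp : ((ka : ℤ) - (nb : ℤ)) = ((ka + 1 : ℕ) : ℤ) - (nb : ℤ) + 2 * ((0 : ℕ) : ℤ) - 1 := by
        push_cast; ring
      rw [hexp]
      abel
    · -- na = ka + 1, nc = kc + 1
      rw [F_mul_dpow_E1 _ _ _ _ hE1F1 hK1E1 hK1'E1 ka,
        F_mul_dpow_E1 _ _ _ _ hE1F1 hK1E1 hK1'E1 kc]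
      have hcastA : ((ka + 1 : ℕ) : ℤ) - 1 = ((ka : ℕ) : ℤ) := by push_cast; ring
      have hcastC : ((kc + 1 : ℕ) : ℤ) - 1 = ((kc : ℕ) : ℤ) := by push_cast; ring
      rw [hcastA, hcastC, hE3 ka nb (kc + 1), hE3 (ka + 1) nb kc]
      rw [neg_mul, mul_assoc (dpow E₁ ka),
        show brK K₁ K₁' (ka : ℤ) * (dpow E₂ nb * dpow E₁ (kc + 1))
          = brK K₁ K₁' (ka : ℤ) * dpow E₂ nb * dpow E₁ (kc + 1) from by rw [mul_assoc],
        brK_mul_dpow_E2 _ _ _ hK1E2 hK1'E2, mul_assoc (dpow E₂ nb),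
        brK_mul_dpow_E1 _ _ _ hK1E1 hK1'E1]
      have hexp : ((ka : ℤ) - (nb : ℤ) + 2 * ((kc + 1 : ℕ) : ℤ))
          = ((ka + 1 : ℕ) : ℤ) - (nb : ℤ) + 2 * ((kc + 1 : ℕ) : ℤ) - 1 := by
        push_cast; ring
      rw [hexp]
      noncomm_ring
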